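/- arXiv:0810.5435 — 3 statements merged into one kernel-verified Lean document; each statement's English description precedes it below -/
import Mathlib

section
/- Let μ be a probability measure, h ≥ 0 with ∫ h dμ = 1, ∫ h log h dμ ≤ c for some c > 0, and K > e. Then ∫ (h ∧ K) dμ ≥ 1 − c/(log K − 1), where h ∧ K denotes the pointwise minimum. -/
open MeasureTheory Real

theorem truncation_mass_bound {α : Type*} [MeasurableSpace α]
    (μ : Measure α) [IsProbabilityMeasure μ]
    (h : α → ℝ) (hmeas : Measurable h) (hnonneg : ∀ x, 0 ≤ h x)
    (hint : Integrable h μ) (hmass : ∫ x, h x ∂μ = 1)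
    (hent : Integrable (fun x => h x * Real.log (h x)) μ)
    (c : ℝ) (hc : 0 < c) (hentc : ∫ x, h x * Real.log (h x) ∂μ ≤ c)
    (K : ℝ) (hK : Real.exp 1 < K) :
    1 - c / (Real.log K - 1) ≤ ∫ x, min (h x) K ∂μ := by
  have hK0 : 0 < K := lt_trans (Real.exp_pos 1) hK
  have hlogK : 1 < Real.log K := by
    have := Real.log_lt_log (Real.exp_pos 1) hK
    rwa [Real.log_exp] at this
  set L := Real.log K - 1 with hL
  have hL0 : 0 < L := by simp only [hL]; linarith
  have aux : ∀ t : ℝ, 0 ≤ t → t - 1 ≤ t * Real.log t := by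
    intro t ht
    rcases eq_or_lt_of_le ht with h0 | h0
    · simp [← h0]
    · have h1 : 1 - t⁻¹ ≤ Real.log t := Real.one_sub_inv_le_log_of_pos h0
      have h2 := mul_le_mul_of_nonneg_left h1 (le_of_lt h0)
      rw [mul_sub, mul_inv_cancel₀ (ne_of_gt h0)] at h2
      linarith
  have ptwise : ∀ x, L * (h x - min (h x) K) + (h x - 1) ≤ h x * Real.log (h x) := by
    intro x
    rcases le_or_gt (h x) K with hle | hgt
    · rw [min_eq_left hle]
      have := aux (h x) (hnonneg x)
      simpa using this
    · rw [min_eq_right hgt.le]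
      have h1 : Real.log K ≤ Real.log (h x) := Real.log_le_log hK0 hgt.le
      have h2 : K - 1 ≤ K * Real.log K := aux K hK0.le
      have h3 := mul_le_mul_of_nonneg_left h1 (hnonneg x)
      simp only [hL]
      nlinarith
  have hmin_int : Integrable (fun x => min (h x) K) μ := by
    refine hint.mono ((hmeas.min measurable_const).aestronglyMeasurable) ?_
    filter_upwards with x
    rw [Real.norm_eq_abs, Real.norm_eq_abs, abs_of_nonneg (le_min (hnonneg x) hK0.le),
      abs_of_nonneg (hnonneg x)]
    exact min_le_left _ _
  have lhs_int : Integrable (fun x => L * (h x - min (h x) K) + (h x - 1)) μ :=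
    ((hint.sub hmin_int).const_mul L).add (hint.sub (integrable_const 1))
  have key : ∫ x, (L * (h x - min (h x) K) + (h x - 1)) ∂μ
      ≤ ∫ x, h x * Real.log (h x) ∂μ := integral_mono lhs_int hent ptwise
  have comp : ∫ x, (L * (h x - min (h x) K) + (h x - 1)) ∂μ
      = L * (1 - ∫ x, min (h x) K ∂μ) := by
    have i1 : Integrable (fun x => L * (h x - min (h x) K)) μ :=
      (hint.sub hmin_int).const_mul L
    have i2 : Integrable (fun x => h x - 1) μ := hint.sub (integrable_const 1)
    rw [integral_add i1 i2, integral_const_mul, integral_sub hint hmin_int,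
      integral_sub hint (integrable_const 1), hmass, integral_const]
    simp
  rw [comp] at key
  have hfin : 1 - ∫ x, min (h x) K ∂μ ≤ c / L := by
    rw [le_div_iff₀ hL0]
    nlinarith
  linarith
end

section
/- Let V, U ∈ C²(ℝ^d), let μ be a probability measure with density proportional to e^{−V}, let ℒf = Δf − ⟨∇V, ∇f⟩, and let φ : ℝ^d → ℝ be continuous with ℒU(x) + |∇U(x)|² ≤ −φ(x) for all x. Then for every g ∈ C_c^∞(ℝ^d), ∫ φ g² dμ ≤ ∫ |∇g|² dμ. -/
open MeasureTheory
open scoped RealInnerProductSpace NNReal ENNReal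

noncomputable def laplacian {d : ℕ} (f : EuclideanSpace ℝ (Fin d) → ℝ)
    (x : EuclideanSpace ℝ (Fin d)) : ℝ :=
  ∑ i : Fin d,
    fderiv ℝ (fun y => fderiv ℝ f y (EuclideanSpace.single i 1)) x
      (EuclideanSpace.single i 1)

section Aux

variable {d : ℕ}

private lemma fderiv_eq_inner_gradient (h : EuclideanSpace ℝ (Fin d) → ℝ)
    (x v : EuclideanSpace ℝ (Fin d)) :
    fderiv ℝ h x v = ⟪gradient h x, v⟫ := by
  rw [gradient, InnerProductSpace.toDual_symm_apply]

private lemma inner_eq_sum_single (a b : EuclideanSpace ℝ (Fin d)) :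
    ⟪a, b⟫ = ∑ i : Fin d, ⟪a, EuclideanSpace.single i 1⟫ * ⟪b, EuclideanSpace.single i 1⟫ := by
  simp [EuclideanSpace.inner_single_right, PiLp.inner_apply, RCLike.inner_apply, mul_comm]

private lemma integral_fderiv_apply_eq_zero (f : EuclideanSpace ℝ (Fin d) → ℝ)
    (hf : ContDiff ℝ 1 f) (hfc : HasCompactSupport f) (v : EuclideanSpace ℝ (Fin d)) :
    ∫ x, fderiv ℝ f x v = 0 := by
  have h := integral_mul_fderiv_eq_neg_fderiv_mul_of_integrable (μ := volume)
    (f := f) (g := fun _ => (1:ℝ)) (v := v)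
    ?_ ?_ ?_ (fun x _ => hf.differentiable one_ne_zero x) (fun x _ => differentiable_const (1:ℝ) x)
  · simpa using h
  · simpa using (hf.continuous_fderiv one_ne_zero).clm_apply continuous_const
      |>.integrable_of_hasCompactSupport (hfc.fderiv_apply ℝ v)
  · simp
  · simpa using hf.continuous.integrable_of_hasCompactSupport hfc

/-- The key inequality with respect to Lebesgue measure. -/
private lemma key_lebesgue {d : ℕ}
    (V U : EuclideanSpace ℝ (Fin d) → ℝ)
    (hV : ContDiff ℝ 2 V) (hU : ContDiff ℝ 2 U)
    (φ : EuclideanSpace ℝ (Fin d) → ℝ) (hφ : Continuous φ)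
    (hLyap : ∀ x, (laplacian U x - ⟪gradient V x, gradient U x⟫)
      + ‖gradient U x‖ ^ 2 ≤ -φ x)
    (g : EuclideanSpace ℝ (Fin d) → ℝ)
    (hg : ContDiff ℝ (⊤ : ℕ∞) g) (hgc : HasCompactSupport g) :
    ∫ x, Real.exp (-V x) * (φ x * (g x) ^ 2)
      ≤ ∫ x, Real.exp (-V x) * ‖gradient g x‖ ^ 2 := by
  classical
  set e : Fin d → EuclideanSpace ℝ (Fin d) := fun i => EuclideanSpace.single i 1 with he
  set ρ : EuclideanSpace ℝ (Fin d) → ℝ := fun x => Real.exp (-V x) with hρdef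
  set c : EuclideanSpace ℝ (Fin d) → ℝ := fun x => g x ^ 2 * ρ x with hcdef
  set u : Fin d → EuclideanSpace ℝ (Fin d) → ℝ :=
    fun i x => fderiv ℝ U x (e i) with hudef
  set f : Fin d → EuclideanSpace ℝ (Fin d) → ℝ := fun i x => c x * u i x with hfdef
  set D : EuclideanSpace ℝ (Fin d) → ℝ :=
    fun x => ∑ i : Fin d, fderiv ℝ (f i) x (e i) with hDdef
  have hV1 : ContDiff ℝ 1 V := hV.of_le one_le_two
  have hU1 : ContDiff ℝ 1 U := hU.of_le one_le_two
  have hg1 : ContDiff ℝ 1 g := hg.of_le (by simp)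
  have hρ1 : ContDiff ℝ 1 ρ := (Real.contDiff_exp.of_le le_top).comp hV1.neg
  have hc1 : ContDiff ℝ 1 c := (hg1.pow 2).mul hρ1
  have hu1 : ∀ i, ContDiff ℝ 1 (u i) := fun i =>
    (hU.fderiv_right (m := 1) (by norm_num)).clm_apply contDiff_const
  have hf1 : ∀ i, ContDiff ℝ 1 (f i) := fun i => hc1.mul (hu1 i)
  have hfc : ∀ i, HasCompactSupport (f i) := by
    intro i
    refine hgc.mono' ?_
    refine Function.support_subset_iff.2 fun x hx => subset_closure ?_
    simp only [Function.mem_support]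
    intro h0
    exact hx (by simp [hfdef, hcdef, h0])
  have intDi : ∀ i, Integrable (fun x => fderiv ℝ (f i) x (e i)) volume := by
    intro i
    exact (((hf1 i).continuous_fderiv one_ne_zero).clm_apply continuous_const).integrable_of_hasCompactSupport
      ((hfc i).fderiv_apply ℝ (e i))
  have intD : Integrable D volume := by
    rw [hDdef]
    exact integrable_finset_sum _ fun i _ => intDi i
  have hD0 : ∫ x, D x = 0 := by
    rw [hDdef, integral_finset_sum _ fun i _ => intDi i]
    refine Finset.sum_eq_zero fun i _ => ?_
    exact integral_fderiv_apply_eq_zero (f i) (hf1 i) (hfc i) (e i)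
  -- pointwise formula for D
  have hDx : ∀ x, D x = ρ x * (2 * g x * ⟪gradient g x, gradient U x⟫
      - g x ^ 2 * ⟪gradient V x, gradient U x⟫ + g x ^ 2 * laplacian U x) := by
    intro x
    have hdg := (hg1.differentiable one_ne_zero x).hasFDerivAt
    have hdV := (hV1.differentiable one_ne_zero x).hasFDerivAt
    have h1 : HasFDerivAt (fun y => g y ^ 2) ((2 * g x) • fderiv ℝ g x) x := by
      have heq : (fun y : EuclideanSpace ℝ (Fin d) => g y ^ 2) = fun y => g y * g y := by
        funext y; ring
      rw [heq]
      rw [two_mul, add_smul]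
      exact hdg.mul hdg
    have h2 : HasFDerivAt ρ (Real.exp (-V x) • (-(fderiv ℝ V x))) x :=
      by have := (Real.hasDerivAt_exp (-V x)).comp_hasFDerivAt x hdV.neg; exact this
    have hdc : HasFDerivAt c
        (g x ^ 2 • (Real.exp (-V x) • (-(fderiv ℝ V x))) + ρ x • ((2 * g x) • fderiv ℝ g x)) x :=
      h1.mul h2
    have hfderc := hdc.fderiv
    have hsum : ∀ i, fderiv ℝ (f i) x (e i)
        = fderiv ℝ c x (e i) * u i x + c x * fderiv ℝ (u i) x (e i) := by
      intro i
      have := fderiv_fun_mul (𝕜 := ℝ) (hc1.differentiable one_ne_zero x)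
        ((hu1 i).differentiable one_ne_zero x)
      rw [hfdef]
      simp only []
      rw [this]
      simp [smul_eq_mul]
      ring
    have hDsplit : D x = (∑ i : Fin d, fderiv ℝ c x (e i) * u i x) + c x * laplacian U x := by
      rw [hDdef]
      simp only [hsum]
      rw [Finset.sum_add_distrib, laplacian, Finset.mul_sum]
    have hfirst : (∑ i : Fin d, fderiv ℝ c x (e i) * u i x)
        = fderiv ℝ c x (gradient U x) := by
      have : ∀ i, fderiv ℝ c x (e i) * u i x
          = ⟪gradient c x, e i⟫ * ⟪gradient U x, e i⟫ := by
        intro i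
        rw [hudef]
        simp only []
        rw [fderiv_eq_inner_gradient c, fderiv_eq_inner_gradient U]
      simp only [this]
      rw [← inner_eq_sum_single, ← fderiv_eq_inner_gradient]
    have hval : fderiv ℝ c x (gradient U x)
        = ρ x * (2 * g x * ⟪gradient g x, gradient U x⟫
          - g x ^ 2 * ⟪gradient V x, gradient U x⟫) := by
      rw [hfderc]
      simp only [ContinuousLinearMap.add_apply, ContinuousLinearMap.smul_apply,
        ContinuousLinearMap.neg_apply, smul_eq_mul]
      rw [fderiv_eq_inner_gradient V, fderiv_eq_inner_gradient g]
      rw [hρdef]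
      ring
    rw [hDsplit, hfirst, hval, hcdef]
    ring
  -- pointwise inequality
  have hpt : ∀ x, ρ x * (φ x * g x ^ 2) ≤ ρ x * ‖gradient g x‖ ^ 2 - D x := by
    intro x
    have hL := hLyap x
    have hρpos : 0 < ρ x := Real.exp_pos _
    have hkey : 2 * g x * ⟪gradient g x, gradient U x⟫
        ≤ ‖gradient g x‖ ^ 2 + g x ^ 2 * ‖gradient U x‖ ^ 2 := by
      have h0 : 0 ≤ ‖gradient g x - g x • gradient U x‖ ^ 2 := sq_nonneg _
      rw [norm_sub_sq_real, real_inner_smul_right, norm_smul, Real.norm_eq_abs] at h0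
      nlinarith [h0, sq_abs (g x)]
    rw [hDx x]
    nlinarith [mul_le_mul_of_nonneg_left hL (mul_nonneg (sq_nonneg (g x)) hρpos.le),
      mul_le_mul_of_nonneg_left hkey hρpos.le]
  -- integrability of both sides
  have hcontρ : Continuous ρ := Real.continuous_exp.comp hV.continuous.neg
  have hGg : Continuous (gradient g) := by
    show Continuous fun x => (InnerProductSpace.toDual ℝ _).symm (fderiv ℝ g x)
    exact (LinearIsometryEquiv.continuous _).comp (hg.continuous_fderiv (by simp))
  have hGgc : HasCompactSupport (gradient g) :=
    (hgc.fderiv ℝ).comp_left (g := fun L : _ →L[ℝ] ℝ => (InnerProductSpace.toDual ℝ _).symm L)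
      (map_zero _)
  have intL : Integrable (fun x => ρ x * (φ x * g x ^ 2)) volume := by
    refine (hcontρ.mul (hφ.mul (hg.continuous.pow 2))).integrable_of_hasCompactSupport ?_
    refine hgc.mono' (Function.support_subset_iff.2 fun x hx => subset_closure ?_)
    simp only [Function.mem_support]
    intro h0
    exact hx (by simp [h0])
  have intR : Integrable (fun x => ρ x * ‖gradient g x‖ ^ 2) volume := by
    refine (hcontρ.mul ((hGg.norm).pow 2)).integrable_of_hasCompactSupport ?_
    refine hGgc.mono' (Function.support_subset_iff.2 fun x hx => subset_closure ?_)
    simp only [Function.mem_support]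
    intro h0
    exact hx (by simp [h0])
  calc ∫ x, ρ x * (φ x * g x ^ 2)
      ≤ ∫ x, (ρ x * ‖gradient g x‖ ^ 2 - D x) :=
        integral_mono intL (intR.sub intD) hpt
    _ = (∫ x, ρ x * ‖gradient g x‖ ^ 2) - ∫ x, D x := integral_sub intR intD
    _ = ∫ x, ρ x * ‖gradient g x‖ ^ 2 := by rw [hD0, sub_zero]

end Aux

theorem lyapunov_weighted_poincare {d : ℕ}
    (V U : EuclideanSpace ℝ (Fin d) → ℝ)
    (hV : ContDiff ℝ 2 V) (hU : ContDiff ℝ 2 U)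
    (Z : ℝ) (hZ : 0 < Z)
    (μ : Measure (EuclideanSpace ℝ (Fin d)))
    (hμ : μ = volume.withDensity (fun x => ENNReal.ofReal (Real.exp (-V x) / Z)))
    (hprob : IsProbabilityMeasure μ)
    (φ : EuclideanSpace ℝ (Fin d) → ℝ) (hφ : Continuous φ)
    (hLyap : ∀ x, (laplacian U x - ⟪gradient V x, gradient U x⟫)
      + ‖gradient U x‖ ^ 2 ≤ -φ x)
    (g : EuclideanSpace ℝ (Fin d) → ℝ)
    (hg : ContDiff ℝ (⊤ : ℕ∞) g) (hgc : HasCompactSupport g) :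
    ∫ x, φ x * (g x) ^ 2 ∂μ ≤ ∫ x, ‖gradient g x‖ ^ 2 ∂μ := by
  have conv : ∀ F : EuclideanSpace ℝ (Fin d) → ℝ,
      ∫ x, F x ∂μ = ∫ x, (Real.exp (-V x) / Z) * F x := by
    intro F
    rw [hμ]
    have hm : Measurable (fun x => Real.toNNReal (Real.exp (-V x) / Z)) :=
      (continuous_real_toNNReal.comp
        ((Real.continuous_exp.comp hV.continuous.neg).div_const Z)).measurable
    have hd : (fun x => ENNReal.ofReal (Real.exp (-V x) / Z))
        = fun x => ((Real.toNNReal (Real.exp (-V x) / Z) : ℝ≥0) : ℝ≥0∞) := rfl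
    rw [hd, integral_withDensity_eq_integral_smul hm]
    congr 1
    funext x
    rw [NNReal.smul_def, Real.coe_toNNReal _ (by positivity), smul_eq_mul]
  rw [conv, conv]
  have key := key_lebesgue V U hV hU φ hφ hLyap g hg hgc
  have h1 : (fun x => (Real.exp (-V x) / Z) * (φ x * g x ^ 2))
      = fun x => (1 / Z) * (Real.exp (-V x) * (φ x * g x ^ 2)) := by
    funext x; ring
  have h2 : (fun x => (Real.exp (-V x) / Z) * ‖gradient g x‖ ^ 2)
      = fun x => (1 / Z) * (Real.exp (-V x) * ‖gradient g x‖ ^ 2) := by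
    funext x; ring
  rw [h1, h2, integral_const_mul, integral_const_mul]
  exact mul_le_mul_of_nonneg_left key (by positivity)
end

section
/- Let G : [0,1] → ℝ be continuously differentiable with G(0) = 1, G'(0) = 0 (in the sense that lim_{λ→0⁺} log G(λ)/λ = 0), G(λ) > 0 everywhere, and suppose there exists λ₀ ∈ [0,1) with G(λ₀) = 1, G(λ) > 1 for λ ∈ (λ₀, 1], and λ G'(λ) ≤ G(λ) log G(λ) for all λ ∈ (λ₀, 1]. Then G(1) ≤ 1 (hence G(1) = 1, contradicting G > 1 on (λ₀,1]). -/
open Set Filter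

theorem ode_monotonicity_argument
    (G : ℝ → ℝ)
    (hG : ContDiffOn ℝ 1 G (Set.Icc 0 1))
    (hG0 : G 0 = 1)
    (hlim : Tendsto (fun l => Real.log (G l) / l) (nhdsWithin 0 (Set.Ioi 0))
      (nhds 0))
    (hGpos : ∀ l ∈ Set.Icc (0 : ℝ) 1, 0 < G l)
    (l₀ : ℝ) (hl₀ : l₀ ∈ Set.Ico (0 : ℝ) 1) (hGl₀ : G l₀ = 1)
    (hGgt : ∀ l ∈ Set.Ioc l₀ 1, 1 < G l)
    (hode : ∀ l ∈ Set.Ioc l₀ 1, l * deriv G l ≤ G l * Real.log (G l)) :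
    G 1 ≤ 1 := by
  obtain ⟨hl₀0, hl₀1⟩ := hl₀
  set H : ℝ → ℝ := fun l => Real.log (G l) / l with hHdef
  have hsub : Set.Ioc l₀ 1 ⊆ Set.Icc 0 1 := fun x hx =>
    ⟨le_trans hl₀0 hx.1.le, hx.2⟩
  have hC : ContinuousOn G (Set.Icc 0 1) := hG.continuousOn
  -- differentiability at interior points
  have hDiffAt : ∀ x ∈ Set.Ioo l₀ 1, DifferentiableAt ℝ G x := by
    intro x hx
    have hx01 : x ∈ Set.Ioo (0 : ℝ) 1 := ⟨lt_of_le_of_lt hl₀0 hx.1, hx.2⟩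
    have hmem : Set.Icc (0 : ℝ) 1 ∈ nhds x := Icc_mem_nhds hx01.1 hx01.2
    exact (hG.differentiableOn one_ne_zero x ⟨hx01.1.le, hx01.2.le⟩).differentiableAt hmem
  -- H is antitone on Ioc l₀ 1
  have hanti : AntitoneOn H (Set.Ioc l₀ 1) := by
    apply antitoneOn_of_deriv_nonpos (convex_Ioc l₀ 1)
    · apply ContinuousOn.div
      · exact ((hC.mono hsub).log (fun x hx => (hGpos x (hsub hx)).ne'))
      · exact continuousOn_id
      · exact fun x hx => (lt_of_le_of_lt hl₀0 hx.1).ne'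
    · intro x hx
      rw [interior_Ioc] at hx
      have hxpos : 0 < x := lt_of_le_of_lt hl₀0 hx.1
      have hGx : 0 < G x := hGpos x (hsub ⟨hx.1, hx.2.le⟩)
      have hd : HasDerivAt (fun l => Real.log (G l)) (deriv G x / G x) x :=
        ((hDiffAt x hx).hasDerivAt).log hGx.ne'
      exact ((hd.div (hasDerivAt_id x) hxpos.ne').differentiableAt).differentiableWithinAt
    · intro x hx
      rw [interior_Ioc] at hx
      have hxpos : 0 < x := lt_of_le_of_lt hl₀0 hx.1
      have hGx : 0 < G x := hGpos x (hsub ⟨hx.1, hx.2.le⟩)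
      have hd : HasDerivAt (fun l => Real.log (G l)) (deriv G x / G x) x :=
        ((hDiffAt x hx).hasDerivAt).log hGx.ne'
      have hH : HasDerivAt H ((deriv G x / G x * x - Real.log (G x) * 1) / x ^ 2) x :=
        hd.div (hasDerivAt_id x) hxpos.ne'
      rw [hH.deriv]
      apply div_nonpos_of_nonpos_of_nonneg _ (sq_nonneg x)
      have hode' := hode x ⟨hx.1, hx.2.le⟩
      have : deriv G x / G x * x ≤ Real.log (G x) := by
        rw [div_mul_eq_mul_div, div_le_iff₀ hGx]
        nlinarith
      linarith
  -- key inequality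
  have key : ∀ l ∈ Set.Ioc l₀ 1, Real.log (G 1) ≤ H l := by
    intro l hl
    have h1 : H 1 ≤ H l := hanti hl ⟨hl₀1, le_rfl⟩ hl.2
    simpa [hHdef] using h1
  -- tendsto of H at l₀ from the right
  have hten : Tendsto H (nhdsWithin l₀ (Set.Ioi l₀)) (nhds 0) := by
    rcases eq_or_lt_of_le hl₀0 with h0 | h0
    · rw [← h0] at *
      exact hlim
    · have hGt : Tendsto G (nhdsWithin l₀ (Set.Ioi l₀)) (nhds (G l₀)) := by
        rw [← nhdsWithin_Ioc_eq_nhdsGT hl₀1]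
        exact (hC l₀ ⟨hl₀0, hl₀1.le⟩).mono hsub
      have hGl₀pos : (0:ℝ) < G l₀ := hGpos l₀ ⟨hl₀0, hl₀1.le⟩
      have hlogt : Tendsto (fun l => Real.log (G l)) (nhdsWithin l₀ (Set.Ioi l₀))
          (nhds (Real.log (G l₀))) :=
        ((Real.continuousAt_log hGl₀pos.ne').tendsto).comp hGt
      have hid : Tendsto (fun l : ℝ => l) (nhdsWithin l₀ (Set.Ioi l₀)) (nhds l₀) :=
        tendsto_id.mono_left nhdsWithin_le_nhds
      have := hlogt.div hid h0.ne'
      simpa [hHdef, hGl₀, Pi.div_def] using this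
  have hev : ∀ᶠ l in nhdsWithin l₀ (Set.Ioi l₀), Real.log (G 1) ≤ H l := by
    rw [← nhdsWithin_Ioc_eq_nhdsGT hl₀1]
    exact eventually_mem_nhdsWithin.mono (fun l hl => key l hl)
  have hlog : Real.log (G 1) ≤ 0 := ge_of_tendsto hten hev
  by_contra h
  push_neg at h
  exact absurd (Real.log_pos h) (not_lt.mpr hlog)
end
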